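/- Let d ≥ 1 and let f : ℝ^d → ℂ be C^∞. Then for every x ∈ [0,1]^d, f(x) = ∑_{u⊆[d]} ∫_{[0,1]^u} ( ∏_{j∈u} (t_j − χ_{[x_j,1]}(t_j)) ) · g_u(t_u) dt_u, where g_u(t_u) = ∫_{[0,1]^{[d]∖u}} f^{(u)}(t_u; s_{u^c}) ds_{u^c} is the u-th ANOVA term's derivative integral, χ_{[a,1]} is the indicator function of [a,1], and the term for u = ∅ is ∫_{[0,1]^d} f(s) ds (ANOVA decomposition identity). -/

import Mathlib

open MeasureTheory

/-- Partial derivative in direction `j`. -/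
noncomputable def pderiv {d : ℕ} (j : Fin d) (f : (Fin d → ℝ) → ℂ) : (Fin d → ℝ) → ℂ :=
  fun x => fderiv ℝ f x (Pi.single j 1)

/-- First-order mixed partial derivative `f^{(u)} = (∏_{j∈u} ∂/∂x_j) f`. -/
noncomputable def mderiv {d : ℕ} (u : Finset (Fin d)) (f : (Fin d → ℝ) → ℂ) : (Fin d → ℝ) → ℂ :=
  u.toList.foldr pderiv f

/-- The unit cube `[0,1]^d`. -/
def cube (d : ℕ) : Set (Fin d → ℝ) := Set.univ.pi fun _ => Set.Icc 0 1

/-- The point `(x_u; t_{u^c})`: `j`-th coordinate is `x j` for `j ∈ u` and `t j` otherwise. -/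
def combine {d : ℕ} (u : Finset (Fin d)) (x t : Fin d → ℝ) : Fin d → ℝ :=
  fun j => if j ∈ u then x j else t j

noncomputable section AnovaAux

open Function Set

/-- 1-dimensional base measure : Lebesgue on `[0,1]`. -/
def mu1 : Measure ℝ := volume.restrict (Set.Icc 0 1)

/-- product measure on `[0,1]^d`. -/
def piMu (d : ℕ) : Measure (Fin d → ℝ) := Measure.pi fun _ => mu1

instance : IsProbabilityMeasure mu1 := by
  constructor
  rw [mu1, Measure.restrict_apply_univ, Real.volume_Icc]
  norm_num

instance {d : ℕ} : IsProbabilityMeasure (piMu d) := by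
  rw [piMu]; infer_instance

lemma cube_restrict (d : ℕ) :
    (volume : Measure (Fin d → ℝ)).restrict (cube d) = piMu d := by
  refine Eq.symm (Measure.pi_eq fun s hs => ?_)
  rw [Measure.restrict_apply (MeasurableSet.univ_pi hs), cube, ← Set.pi_inter_distrib,
    volume_pi, Measure.pi_pi]
  exact Finset.prod_congr rfl fun i _ => (Measure.restrict_apply (hs i)).symm

lemma contDiff_pderiv {d : ℕ} (j : Fin d) {g : (Fin d → ℝ) → ℂ}
    (hg : ContDiff ℝ (⊤ : ℕ∞) g) : ContDiff ℝ (⊤ : ℕ∞) (pderiv j g) := by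
  have h : pderiv j g
      = (ContinuousLinearMap.apply ℝ ℂ (Pi.single j 1 : Fin d → ℝ)) ∘ (fderiv ℝ g) := rfl
  rw [h]
  exact (ContinuousLinearMap.apply ℝ ℂ (Pi.single j 1 : Fin d → ℝ)).contDiff.comp
    (hg.fderiv_right (by simp))

lemma contDiff_foldr {d : ℕ} (l : List (Fin d)) {f : (Fin d → ℝ) → ℂ}
    (hf : ContDiff ℝ (⊤ : ℕ∞) f) : ContDiff ℝ (⊤ : ℕ∞) (l.foldr pderiv f) := by
  induction l with
  | nil => exact hf
  | cons a l ih => exact contDiff_pderiv a ih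

lemma contDiff_mderiv {d : ℕ} (u : Finset (Fin d)) {f : (Fin d → ℝ) → ℂ}
    (hf : ContDiff ℝ (⊤ : ℕ∞) f) : ContDiff ℝ (⊤ : ℕ∞) (mderiv u f) :=
  contDiff_foldr _ hf

lemma pderiv_comm {d : ℕ} (i k : Fin d) {g : (Fin d → ℝ) → ℂ}
    (hg : ContDiff ℝ (⊤ : ℕ∞) g) : pderiv i (pderiv k g) = pderiv k (pderiv i g) := by
  funext z
  have hg1 : Differentiable ℝ g := hg.differentiable (by simp)
  have hd2 : Differentiable ℝ (fderiv ℝ g) :=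
    (hg.fderiv_right (m := (⊤ : ℕ∞)) (by simp)).differentiable (by simp)
  have key : ∀ v w : Fin d → ℝ, fderiv ℝ (fun y => fderiv ℝ g y v) z w
      = fderiv ℝ (fderiv ℝ g) z w v := by
    intro v w
    have H : HasFDerivAt (fun y => (fderiv ℝ g y) v)
        ((ContinuousLinearMap.apply ℝ ℂ v).comp (fderiv ℝ (fderiv ℝ g) z)) z :=
      (ContinuousLinearMap.apply ℝ ℂ v).hasFDerivAt.comp z (hd2 z).hasFDerivAt
    rw [H.fderiv]; rfl
  have symm := second_derivative_symmetric (f' := fderiv ℝ g)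
    (fun y => (hg1 y).hasFDerivAt) (hd2 z).hasFDerivAt
  show fderiv ℝ (fun y => fderiv ℝ g y (Pi.single k 1)) z (Pi.single i 1)
      = fderiv ℝ (fun y => fderiv ℝ g y (Pi.single i 1)) z (Pi.single k 1)
  rw [key, key]
  exact symm _ _

lemma foldr_perm {d : ℕ} {l₁ l₂ : List (Fin d)} (h : l₁.Perm l₂) {f : (Fin d → ℝ) → ℂ}
    (hf : ContDiff ℝ (⊤ : ℕ∞) f) : l₁.foldr pderiv f = l₂.foldr pderiv f := by
  induction h with
  | nil => rfl
  | cons a h ih => simp only [List.foldr, ih]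
  | swap a b l => exact pderiv_comm _ _ (contDiff_foldr l hf)
  | trans h₁ h₂ ih₁ ih₂ => rw [ih₁, ih₂]

lemma mderiv_insert {d : ℕ} {j : Fin d} {u : Finset (Fin d)} (hj : j ∉ u)
    {f : (Fin d → ℝ) → ℂ} (hf : ContDiff ℝ (⊤ : ℕ∞) f) :
    mderiv (insert j u) f = pderiv j (mderiv u f) :=
  foldr_perm (Finset.toList_insert hj) hf

/-- marginalization over one coordinate. -/
lemma marg {d : ℕ} (j : Fin d) (g : (Fin d → ℝ) → ℂ) (hg : Integrable g (piMu d)) :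
    ∫ z, g z ∂(piMu d) = ∫ z, (∫ r, g (Function.update z j r) ∂mu1) ∂(piMu d) := by
  cases d with
  | zero => exact j.elim0
  | succ n =>
    have hmp : MeasurePreserving (MeasurableEquiv.piFinSuccAbove (fun _ : Fin (n+1) => ℝ) j)
        (piMu (n+1)) (mu1.prod (piMu n)) :=
      measurePreserving_piFinSuccAbove (fun _ : Fin (n+1) => mu1) j
    set e := MeasurableEquiv.piFinSuccAbove (fun _ : Fin (n+1) => ℝ) j with he
    have hmps : MeasurePreserving (⇑e.symm) (mu1.prod (piMu n)) (piMu (n+1)) :=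
      MeasurePreserving.symm e hmp
    have hes : ∀ (a : ℝ) (b : Fin n → ℝ), e.symm (a, b) = j.insertNth a b := fun a b => rfl
    have hgi : Integrable (fun p : ℝ × (Fin n → ℝ) => g (j.insertNth p.1 p.2))
        (mu1.prod (piMu n)) := by
      have h2 : (fun p : ℝ × (Fin n → ℝ) => g (j.insertNth p.1 p.2)) = g ∘ e.symm := by
        funext p
        exact (congrArg g (hes p.1 p.2)).symm
      rw [h2]
      exact (hmps.integrable_comp_emb (e.symm.measurableEmbedding)).mpr hg
    have key : ∀ (a r : ℝ) (b : Fin n → ℝ),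
        Function.update (j.insertNth a b) j r
          = j.insertNth (α := fun _ => ℝ) r b := fun a r b => by
      simp
    have hsnd : (mu1.prod (piMu n)).map Prod.snd = piMu n := by
      rw [Measure.map_snd_prod, measure_univ, one_smul]
    have hPhiM : AEStronglyMeasurable
        (fun b : Fin n → ℝ => ∫ r, g (j.insertNth r b) ∂mu1) (piMu n) := by
      have hsw : AEStronglyMeasurable
          (fun q : (Fin n → ℝ) × ℝ => g (j.insertNth q.2 q.1)) ((piMu n).prod mu1) :=
        hgi.aestronglyMeasurable.prod_swap
      exact hsw.integral_prod_right'
    have L1 : ∫ z, g z ∂(piMu (n+1))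
        = ∫ p : ℝ × (Fin n → ℝ), g (j.insertNth p.1 p.2) ∂(mu1.prod (piMu n)) := by
      rw [← hmps.integral_comp' g]
      exact integral_congr_ae (Filter.Eventually.of_forall fun p => congrArg g (hes p.1 p.2))
    have R1 : ∫ z, (∫ r, g (Function.update z j r) ∂mu1) ∂(piMu (n+1))
        = ∫ p : ℝ × (Fin n → ℝ), (∫ r, g (j.insertNth r p.2) ∂mu1) ∂(mu1.prod (piMu n)) := by
      rw [← hmps.integral_comp' (fun z => ∫ r, g (Function.update z j r) ∂mu1)]
      refine integral_congr_ae (Filter.Eventually.of_forall fun p => ?_)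
      show ∫ r, g (Function.update (j.insertNth p.1 p.2) j r) ∂mu1
          = ∫ r, g (j.insertNth r p.2) ∂mu1
      simp_rw [key]
    have R2 : ∫ p : ℝ × (Fin n → ℝ), (∫ r, g (j.insertNth r p.2) ∂mu1) ∂(mu1.prod (piMu n))
        = ∫ b, (∫ r, g (j.insertNth r b) ∂mu1) ∂(piMu n) := by
      have h0 : AEStronglyMeasurable (fun b : Fin n → ℝ => ∫ r, g (j.insertNth r b) ∂mu1)
          ((mu1.prod (piMu n)).map Prod.snd) := by rw [hsnd]; exact hPhiM
      have h1 := integral_map (f := fun b : Fin n → ℝ => ∫ r, g (j.insertNth r b) ∂mu1)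
        measurable_snd.aemeasurable h0
      rw [hsnd] at h1
      exact h1.symm
    rw [L1, R1, R2, integral_prod _ hgi]
    exact integral_integral_swap (f := fun a b => g (j.insertNth a b)) hgi

/-- Fubini swap between `mu1` and `piMu`. -/
lemma swap_int {d : ℕ} {X : ℝ × (Fin d → ℝ) → ℂ}
    (hX : Integrable X (mu1.prod (piMu d))) :
    ∫ r, (∫ s, X (r, s) ∂(piMu d)) ∂mu1 = ∫ s, (∫ r, X (r, s) ∂mu1) ∂(piMu d) :=
  integral_integral_swap (f := fun r s => X (r, s)) hX

lemma mu1_integral_eq (F : ℝ → ℂ) : ∫ r, F r ∂mu1 = ∫ r in (0:ℝ)..1, F r := by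
  rw [mu1]
  show ∫ r in Set.Icc (0:ℝ) 1, F r = _
  rw [MeasureTheory.integral_Icc_eq_integral_Ioc, ← intervalIntegral.integral_of_le zero_le_one]

lemma one_dim {g G : ℝ → ℂ} (hg : ∀ t, HasDerivAt g (G t) t) (hG : Continuous G)
    {a : ℝ} (ha : a ∈ Set.Icc (0:ℝ) 1) :
    g a = (∫ r, g r ∂mu1)
      + ∫ r, ((r - Set.indicator (Set.Icc a 1) (fun _ => (1:ℝ)) r : ℝ) : ℂ) * G r ∂mu1 := by
  have hgc : Continuous g :=
    continuous_iff_continuousAt.2 fun t => (hg t).differentiableAt.continuousAt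
  have h2 : ∀ r : ℝ,
      ((r - Set.indicator (Set.Icc a 1) (fun _ => (1:ℝ)) r : ℝ) : ℂ) * G r
        = (r : ℂ) * G r - Set.indicator (Set.Icc a 1) (fun s => G s) r := by
    intro r
    by_cases hr : r ∈ Set.Icc a 1
    · simp only [Set.indicator_of_mem hr]
      push_cast
      ring
    · simp [Set.indicator_of_notMem hr]
  have int1 : Integrable (fun r : ℝ => (r : ℂ) * G r) mu1 := by
    rw [mu1]
    exact (Continuous.mul (Complex.continuous_ofReal) hG).integrableOn_Icc
  have int2 : Integrable (Set.indicator (Set.Icc a 1) (fun s => G s)) mu1 := by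
    refine Integrable.indicator ?_ measurableSet_Icc
    rw [mu1]
    exact hG.integrableOn_Icc
  have A : ∫ r, Set.indicator (Set.Icc a 1) (fun s => G s) r ∂mu1 = g 1 - g a := by
    rw [integral_indicator measurableSet_Icc, mu1, Measure.restrict_restrict measurableSet_Icc,
      Set.inter_eq_left.mpr (Set.Icc_subset_Icc ha.1 le_rfl),
      MeasureTheory.integral_Icc_eq_integral_Ioc, ← intervalIntegral.integral_of_le ha.2]
    exact intervalIntegral.integral_eq_sub_of_hasDerivAt (fun t _ => hg t)
      (hG.intervalIntegrable a 1)
  have B : ∫ r, (r : ℂ) * G r ∂mu1 = g 1 - ∫ r, g r ∂mu1 := by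
    rw [mu1_integral_eq, mu1_integral_eq]
    have hu : ∀ r ∈ Set.uIcc (0:ℝ) 1, HasDerivAt (fun s : ℝ => (s : ℂ)) 1 r := by
      intro r _
      simpa using (hasDerivAt_id r).ofReal_comp
    have hv : ∀ r ∈ Set.uIcc (0:ℝ) 1, HasDerivAt g (G r) r := fun r _ => hg r
    have := intervalIntegral.integral_mul_deriv_eq_deriv_mul hu hv
      ((continuous_const : Continuous fun _ : ℝ => (1:ℂ)).intervalIntegrable 0 1)
      (hG.intervalIntegrable 0 1)
    simp only [Complex.ofReal_one, Complex.ofReal_zero, one_mul, zero_mul] at this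
    rw [this]
    simp
  calc g a = (∫ r, g r ∂mu1) + ((∫ r, (r:ℂ) * G r ∂mu1)
        - ∫ r, Set.indicator (Set.Icc a 1) (fun s => G s) r ∂mu1) := by
        rw [A, B]; ring
    _ = _ := by
        rw [← integral_sub int1 int2]
        simp_rw [h2]

/-- The 1-dimensional integration-by-parts step. -/
lemma step1d {d : ℕ} {h : (Fin d → ℝ) → ℂ} (hh : ContDiff ℝ (⊤ : ℕ∞) h) (j : Fin d)
    {a : ℝ} (ha : a ∈ Set.Icc (0:ℝ) 1) (y : Fin d → ℝ) :
    h (Function.update y j a) = (∫ r, h (Function.update y j r) ∂mu1)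
      + ∫ r, ((r - Set.indicator (Set.Icc a 1) (fun _ => (1:ℝ)) r : ℝ) : ℂ) *
          pderiv j h (Function.update y j r) ∂mu1 := by
  have hcurve : Continuous (fun r : ℝ => Function.update y j r) := by
    apply continuous_pi; intro i
    by_cases hij : i = j
    · subst hij; simpa [Function.update_apply] using continuous_id'
    · simpa [Function.update_apply, hij] using continuous_const (y := y i)
  have hder : ∀ t : ℝ, HasDerivAt (fun r => h (Function.update y j r))
      (pderiv j h (Function.update y j t)) t := by
    intro t
    have hc : HasDerivAt (fun r : ℝ => Function.update y j r)
        (Pi.single j 1) t := by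
      have he : (fun r : ℝ => Function.update y j r)
          = fun r => y + (r - y j) • (Pi.single j 1 : Fin d → ℝ) := by
        funext r; funext i
        by_cases hij : i = j
        · subst hij; simp [Function.update_apply]
        · simp [Function.update_apply, hij, Pi.single_eq_of_ne hij]
      rw [he]
      have h1 : HasDerivAt (fun r : ℝ => r - y j) 1 t := (hasDerivAt_id t).sub_const (y j)
      have h2 := h1.smul_const (Pi.single j 1 : Fin d → ℝ)
      simpa using h2.const_add y
    have hh' : HasFDerivAt h (fderiv ℝ h (Function.update y j t)) (Function.update y j t) :=
      (hh.differentiable (by simp) (Function.update y j t)).hasFDerivAt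
    exact hh'.comp_hasDerivAt t hc
  have hG : Continuous (fun r : ℝ => pderiv j h (Function.update y j r)) :=
    (contDiff_pderiv j hh).continuous.comp hcurve
  exact one_dim hder hG ha

section Helpers

variable {d : ℕ}

lemma mem_cube {z : Fin d → ℝ} : z ∈ cube d ↔ ∀ i, z i ∈ Set.Icc (0:ℝ) 1 := by
  rw [cube, Set.mem_univ_pi]

lemma measurableSet_cube : MeasurableSet (cube d) :=
  MeasurableSet.univ_pi fun _ => measurableSet_Icc

lemma combine_empty (t s : Fin d → ℝ) : combine (∅ : Finset (Fin d)) t s = s :=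
  funext fun i => by simp [combine]

lemma combine_univ (t s : Fin d → ℝ) : combine (Finset.univ : Finset (Fin d)) t s = t :=
  funext fun i => by simp [combine]

lemma combine_update_comm {j : Fin d} (v : Finset (Fin d)) (z x : Fin d → ℝ) (r : ℝ) :
    combine (insert j v) (Function.update z j r) x
      = Function.update (combine v z x) j r := by
  funext i
  by_cases h : i = j
  · subst h; simp [combine]
  · simp [combine, Function.update_apply, h, Finset.mem_insert]

lemma combine_update_right {j : Fin d} {u : Finset (Fin d)} (hj : j ∉ u)
    (t s : Fin d → ℝ) (r : ℝ) :
    combine u t (Function.update s j r) = Function.update (combine u t s) j r := by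
  funext i
  by_cases h : i = j
  · subst h; simp [combine, hj]
  · simp [combine, Function.update_apply, h]

lemma combine_update_self {j : Fin d} {v : Finset (Fin d)} (hj : j ∉ v)
    (z x : Fin d → ℝ) :
    Function.update (combine v z x) j (x j) = combine v z x := by
  funext i
  by_cases h : i = j
  · subst h; simp [combine, hj]
  · simp [Function.update_apply, h]

lemma combine_mem_cube {u : Finset (Fin d)} {z s : Fin d → ℝ}
    (hz : z ∈ cube d) (hs : s ∈ cube d) : combine u z s ∈ cube d := by
  rw [mem_cube] at *
  intro i
  by_cases h : i ∈ u <;> simp [combine, h, hz i, hs i]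

lemma update_mem_cube {j : Fin d} {z : Fin d → ℝ} {r : ℝ}
    (hz : z ∈ cube d) (hr : r ∈ Set.Icc (0:ℝ) 1) : Function.update z j r ∈ cube d := by
  rw [mem_cube] at *
  intro i
  by_cases h : i = j
  · subst h; simpa
  · simpa [Function.update_apply, h] using hz i

lemma measurable_combine_right (u : Finset (Fin d)) (t : Fin d → ℝ) :
    Measurable (fun s => combine u t s) := by
  apply measurable_pi_lambda
  intro i
  by_cases h : i ∈ u
  · simpa [combine, h] using (measurable_const : Measurable fun _ : Fin d → ℝ => t i)
  · simpa [combine, h] using measurable_pi_apply i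

lemma measurable_combine_pair (u : Finset (Fin d)) :
    Measurable (fun p : (Fin d → ℝ) × (Fin d → ℝ) => combine u p.1 p.2) := by
  apply measurable_pi_lambda
  intro i
  by_cases h : i ∈ u
  · simpa [combine, h, Function.comp_def] using (measurable_pi_apply i).comp
      (measurable_fst : Measurable fun p : (Fin d → ℝ) × (Fin d → ℝ) => p.1)
  · simpa [combine, h, Function.comp_def] using (measurable_pi_apply i).comp
      (measurable_snd : Measurable fun p : (Fin d → ℝ) × (Fin d → ℝ) => p.2)

lemma measurable_update_pair (j : Fin d) :
    Measurable (fun p : (Fin d → ℝ) × ℝ => Function.update p.1 j p.2) := by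
  apply measurable_pi_lambda
  intro i
  by_cases h : i = j
  · subst h; simpa [Function.update_apply] using measurable_snd
  · simpa [Function.update_apply, h, Function.comp_def] using (measurable_pi_apply i).comp measurable_fst

/-- The weight factor `∏_{j∈u} (z_j − χ_{[x_j,1]}(z_j))`, as a complex number. -/
def Wz (x : Fin d → ℝ) (u : Finset (Fin d)) (z : Fin d → ℝ) : ℂ :=
  ((∏ j ∈ u, (z j - Set.indicator (Set.Icc (x j) 1) (fun _ => (1:ℝ)) (z j)) : ℝ) : ℂ)

lemma stronglyMeasurable_Wz (x : Fin d → ℝ) (u : Finset (Fin d)) :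
    StronglyMeasurable (Wz x u) := by
  apply Measurable.stronglyMeasurable
  apply Complex.measurable_ofReal.comp
  apply Finset.measurable_prod
  intro i _
  exact ((measurable_id.sub (Measurable.indicator measurable_const measurableSet_Icc)).comp
    (measurable_pi_apply i))

lemma norm_Wz_le {x : Fin d → ℝ} (u : Finset (Fin d)) {z : Fin d → ℝ} (hz : z ∈ cube d) :
    ‖Wz x u z‖ ≤ 2 ^ u.card := by
  rw [Wz, Complex.norm_real]
  calc |∏ j ∈ u, (z j - Set.indicator (Set.Icc (x j) 1) (fun _ => (1:ℝ)) (z j))|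
      = ∏ j ∈ u, |z j - Set.indicator (Set.Icc (x j) 1) (fun _ => (1:ℝ)) (z j)| :=
        Finset.abs_prod _ _
    _ ≤ ∏ _j ∈ u, (2:ℝ) := by
        apply Finset.prod_le_prod (fun i _ => abs_nonneg _)
        intro i _
        have h1 : |z i| ≤ 1 := by
          have := (mem_cube.1 hz) i
          rw [abs_le]; constructor <;> [linarith [this.1]; exact this.2]
        have h2 : |Set.indicator (Set.Icc (x i) 1) (fun _ => (1:ℝ)) (z i)| ≤ 1 := by
          by_cases hm : z i ∈ Set.Icc (x i) 1 <;> simp [hm]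
        calc |z i - Set.indicator (Set.Icc (x i) 1) (fun _ => (1:ℝ)) (z i)|
            ≤ |z i| + |Set.indicator (Set.Icc (x i) 1) (fun _ => (1:ℝ)) (z i)| := abs_sub _ _
          _ ≤ 2 := by linarith
    _ = 2 ^ u.card := Finset.prod_const 2

lemma Wz_update {x : Fin d → ℝ} {j : Fin d} {u : Finset (Fin d)} (hj : j ∉ u)
    (z : Fin d → ℝ) (r : ℝ) : Wz x u (Function.update z j r) = Wz x u z := by
  unfold Wz
  congr 1
  apply Finset.prod_congr rfl
  intro i hi
  rw [Function.update_of_ne (ne_of_mem_of_not_mem hi hj)]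

lemma Wz_insert {x : Fin d → ℝ} {j : Fin d} {u : Finset (Fin d)} (hj : j ∉ u)
    (z : Fin d → ℝ) :
    Wz x (insert j u) z
      = ((z j - Set.indicator (Set.Icc (x j) 1) (fun _ => (1:ℝ)) (z j) : ℝ) : ℂ)
        * Wz x u z := by
  rw [Wz, Wz, Finset.prod_insert hj, Complex.ofReal_mul]

lemma Wz_combine {x : Fin d → ℝ} (u : Finset (Fin d)) (t s : Fin d → ℝ) :
    Wz x u (combine u t s) = Wz x u t := by
  unfold Wz
  congr 1
  apply Finset.prod_congr rfl
  intro i hi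
  simp [combine, hi]

/-- Bounded-measurable functions (on the cube). -/
def Nice {d : ℕ} (g : (Fin d → ℝ) → ℂ) : Prop :=
  StronglyMeasurable g ∧ ∃ C : ℝ, ∀ z ∈ cube d, ‖g z‖ ≤ C

lemma Nice.integrable {g : (Fin d → ℝ) → ℂ} (hg : Nice g) : Integrable g (piMu d) := by
  obtain ⟨hm, C, hC⟩ := hg
  refine Integrable.mono' (integrable_const C) hm.aestronglyMeasurable ?_
  rw [← cube_restrict d]
  exact (ae_restrict_iff' measurableSet_cube).mpr (Filter.Eventually.of_forall hC)

lemma nice_form {x : Fin d → ℝ} (hx : x ∈ cube d) (u v : Finset (Fin d))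
    {M : (Fin d → ℝ) → ℂ} (hM : Continuous M) :
    Nice (fun z => Wz x u z * M (combine v z x)) := by
  obtain ⟨B, hB⟩ := (isCompact_univ_pi fun _ : Fin d =>
    isCompact_Icc).exists_bound_of_continuousOn hM.continuousOn
  constructor
  · exact (stronglyMeasurable_Wz x u).mul
      ((hM.measurable.comp (by
        have : Measurable (fun z : Fin d → ℝ => combine v z x) := by
          apply measurable_pi_lambda
          intro i
          by_cases h : i ∈ v
          · simpa [combine, h] using measurable_pi_apply i
          · simpa [combine, h] using (measurable_const : Measurable fun _ : Fin d → ℝ => x i)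
        exact this)).stronglyMeasurable)
  · refine ⟨2 ^ u.card * |B|, fun z hz => ?_⟩
    rw [norm_mul]
    have h1 := norm_Wz_le (x := x) u hz
    have h2 : ‖M (combine v z x)‖ ≤ |B| :=
      le_trans (hB _ (combine_mem_cube hz hx)) (le_abs_self B)
    exact mul_le_mul h1 h2 (norm_nonneg _) (by positivity)

lemma nice_avg (j : Fin d) {Ψ : (Fin d → ℝ) → ℂ} (h : Nice Ψ) :
    Integrable (fun z => ∫ r, Ψ (Function.update z j r) ∂mu1) (piMu d) := by
  obtain ⟨hm, C, hC⟩ := h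
  have hsm : StronglyMeasurable (fun z => ∫ r, Ψ (Function.update z j r) ∂mu1) := by
    have : StronglyMeasurable (fun p : (Fin d → ℝ) × ℝ => Ψ (Function.update p.1 j p.2)) :=
      hm.comp_measurable (measurable_update_pair j)
    exact this.integral_prod_right'
  refine Integrable.mono' (integrable_const C) hsm.aestronglyMeasurable ?_
  rw [← cube_restrict d]
  refine (ae_restrict_iff' measurableSet_cube).mpr (Filter.Eventually.of_forall fun z hz => ?_)
  have hae : ∀ᵐ r ∂mu1, ‖Ψ (Function.update z j r)‖ ≤ C := by
    rw [mu1]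
    exact (ae_restrict_iff' measurableSet_Icc).mpr
      (Filter.Eventually.of_forall fun r hr => hC _ (update_mem_cube hz hr))
  calc ‖∫ r, Ψ (Function.update z j r) ∂mu1‖
      ≤ C * (mu1 Set.univ).toReal := norm_integral_le_of_norm_le_const hae
    _ = C := by simp

lemma nice_inner (u : Finset (Fin d)) {g : (Fin d → ℝ) → ℂ} (hg : Nice g) :
    Nice (fun t => ∫ s, g (combine u t s) ∂(piMu d)) := by
  obtain ⟨hm, C, hC⟩ := hg
  constructor
  · have : StronglyMeasurable (fun p : (Fin d → ℝ) × (Fin d → ℝ) => g (combine u p.1 p.2)) :=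
      hm.comp_measurable (measurable_combine_pair u)
    exact this.integral_prod_right'
  · refine ⟨C, fun t ht => ?_⟩
    have hae : ∀ᵐ s ∂(piMu d), ‖g (combine u t s)‖ ≤ C := by
      rw [← cube_restrict d]
      exact (ae_restrict_iff' measurableSet_cube).mpr
        (Filter.Eventually.of_forall fun s hs => hC _ (combine_mem_cube ht hs))
    calc ‖∫ s, g (combine u t s) ∂(piMu d)‖
        ≤ C * ((piMu d) Set.univ).toReal := norm_integral_le_of_norm_le_const hae
      _ = C := by simp

lemma integrable_prod_aux (j : Fin d) (u : Finset (Fin d)) {t : Fin d → ℝ}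
    (ht : t ∈ cube d) {g : (Fin d → ℝ) → ℂ} (hg : Nice g) :
    Integrable (fun p : ℝ × (Fin d → ℝ) =>
      g (Function.update (combine u t p.2) j p.1)) (mu1.prod (piMu d)) := by
  obtain ⟨hm, C, hC⟩ := hg
  have hmes : Measurable (fun p : ℝ × (Fin d → ℝ) =>
      Function.update (combine u t p.2) j p.1) := by
    have h1 : Measurable (fun p : ℝ × (Fin d → ℝ) =>
        ((combine u t p.2, p.1) : (Fin d → ℝ) × ℝ)) :=
      ((measurable_combine_right u t).comp measurable_snd).prodMk measurable_fst
    exact (measurable_update_pair j).comp h1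
  refine Integrable.mono' (integrable_const C) (hm.comp_measurable hmes).aestronglyMeasurable ?_
  have hprod : mu1.prod (piMu d)
      = (volume.prod volume).restrict (Set.Icc (0:ℝ) 1 ×ˢ cube d) := by
    rw [mu1, ← cube_restrict d, Measure.prod_restrict]
  rw [hprod]
  refine (ae_restrict_iff' (measurableSet_Icc.prod measurableSet_cube)).mpr
    (Filter.Eventually.of_forall fun p hp => ?_)
  exact hC _ (update_mem_cube (combine_mem_cube ht hp.2) hp.1)

/-- Unnesting: an integral over the cube equals a nested integral via `combine`. -/
lemma unnest (u : Finset (Fin d)) {g : (Fin d → ℝ) → ℂ} (hg : Nice g) :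
    ∫ z, g z ∂(piMu d) = ∫ t, (∫ s, g (combine u t s) ∂(piMu d)) ∂(piMu d) := by
  classical
  induction u using Finset.induction_on with
  | empty =>
      simp only [combine_empty]
      rw [integral_const]
      simp
  | @insert j u hj ih =>
      rw [ih]
      have hG : Integrable (fun t => ∫ s, g (combine (insert j u) t s) ∂(piMu d)) (piMu d) :=
        (nice_inner (insert j u) hg).integrable
      have E : ∫ t, (∫ s, g (combine (insert j u) t s) ∂(piMu d)) ∂(piMu d)
          = ∫ t, (∫ s, g (combine u t s) ∂(piMu d)) ∂(piMu d) := by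
        rw [marg j _ hG]
        have hcube : ∀ᵐ t ∂(piMu d), t ∈ cube d := by
          rw [← cube_restrict d]; exact ae_restrict_mem measurableSet_cube
        refine integral_congr_ae (hcube.mono fun t ht => ?_)
        show (∫ r, (∫ s, g (combine (insert j u) (Function.update t j r) s) ∂(piMu d)) ∂mu1)
            = ∫ s, g (combine u t s) ∂(piMu d)
        have step1 : (fun r => ∫ s, g (combine (insert j u) (Function.update t j r) s) ∂(piMu d))
            = fun r => ∫ s, g (Function.update (combine u t s) j r) ∂(piMu d) :=
          funext fun r => integral_congr_ae (Filter.Eventually.of_forall fun s =>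
            congrArg g (combine_update_comm u t s r))
        rw [step1]
        have hF : Integrable (fun s => g (combine u t s)) (piMu d) := by
          obtain ⟨hm, C, hC⟩ := hg
          exact Nice.integrable ⟨hm.comp_measurable (measurable_combine_right u t),
            C, fun s hs => hC _ (combine_mem_cube ht hs)⟩
        have hswap := swap_int (X := fun p : ℝ × (Fin d → ℝ) =>
          g (Function.update (combine u t p.2) j p.1)) (integrable_prod_aux j u ht hg)
        calc (∫ r, (∫ s, g (Function.update (combine u t s) j r) ∂(piMu d)) ∂mu1)
            = ∫ s, (∫ r, g (Function.update (combine u t s) j r) ∂mu1) ∂(piMu d) := hswap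
          _ = ∫ s, g (combine u t s) ∂(piMu d) := by
              have h2 := marg j (fun s => g (combine u t s)) hF
              simp_rw [combine_update_right hj] at h2
              exact h2.symm
      rw [E]

end Helpers

end AnovaAux

/-- ANOVA decomposition identity:
`f(x) = ∑_{u⊆[d]} ∫_{[0,1]^u} (∏_{j∈u} (t_j − χ_{[x_j,1]}(t_j))) g_u(t_u) dt_u` with
`g_u(t_u) = ∫_{[0,1]^{[d]∖u}} f^{(u)}(t_u; s_{u^c}) ds_{u^c}`. The outer integrand depends
only on the coordinates of `t` in `u`, so the integral over `[0,1]^u` is written as an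
integral over the whole cube (a probability space). -/
theorem anova_decomposition {d : ℕ} (hd : 1 ≤ d) (f : (Fin d → ℝ) → ℂ)
    (hf : ContDiff ℝ (⊤ : ℕ∞) f) (x : Fin d → ℝ) (hx : x ∈ cube d) :
    f x = ∑ u : Finset (Fin d),
      ∫ t in cube d,
        ((∏ j ∈ u,
          (t j - Set.indicator (Set.Icc (x j) 1) (fun _ => (1 : ℝ)) (t j)) : ℝ) : ℂ) *
        ∫ s in cube d, mderiv u f (combine u t s) := by
  classical
  have hxI : ∀ i, x i ∈ Set.Icc (0:ℝ) 1 := mem_cube.1 hx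
  simp only [cube_restrict d]
  have main : ∀ v : Finset (Fin d),
      f x = ∑ u ∈ v.powerset, ∫ z, Wz x u z * mderiv u f (combine v z x) ∂(piMu d) := by
    intro v
    induction v using Finset.induction_on with
    | empty =>
        rw [Finset.powerset_empty, Finset.sum_singleton]
        have h0 : ∀ z : Fin d → ℝ, Wz x ∅ z * mderiv ∅ f (combine ∅ z x) = f x := by
          intro z
          rw [combine_empty]
          have h1 : Wz x ∅ z = 1 := by simp [Wz]
          have h2 : mderiv (∅ : Finset (Fin d)) f = f := by
            simp [mderiv, Finset.toList_empty]
          rw [h1, h2, one_mul]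
        calc f x = ∫ _z, f x ∂(piMu d) := by rw [integral_const]; simp
          _ = ∫ z, Wz x ∅ z * mderiv ∅ f (combine ∅ z x) ∂(piMu d) :=
            integral_congr_ae (Filter.Eventually.of_forall fun z => (h0 z).symm)
    | @insert j v hj ih =>
        have hxj : x j ∈ Set.Icc (0:ℝ) 1 := hxI j
        have key : ∀ u ∈ v.powerset,
            (∫ z, Wz x u z * mderiv u f (combine v z x) ∂(piMu d))
            = (∫ z, Wz x u z * mderiv u f (combine (insert j v) z x) ∂(piMu d))
              + ∫ z, Wz x (insert j u) z
                  * mderiv (insert j u) f (combine (insert j v) z x) ∂(piMu d) := by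
          intro u hu
          have hju : j ∉ u := fun h => hj (Finset.mem_powerset.1 hu h)
          have hMc : ContDiff ℝ (⊤ : ℕ∞) (mderiv u f) := contDiff_mderiv u hf
          have hmins : mderiv (insert j u) f = pderiv j (mderiv u f) := mderiv_insert hju hf
          have point : ∀ z : Fin d → ℝ,
              Wz x u z * mderiv u f (combine v z x)
                = (∫ r, (Wz x u z
                    * mderiv u f (Function.update (combine v z x) j r)) ∂mu1)
                  + ∫ r, (Wz x u z
                    * (((r - Set.indicator (Set.Icc (x j) 1) (fun _ => (1:ℝ)) r : ℝ) : ℂ)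
                      * pderiv j (mderiv u f)
                          (Function.update (combine v z x) j r))) ∂mu1 := by
            intro z
            have h1 := step1d hMc j hxj (combine v z x)
            rw [combine_update_self hj z x] at h1
            rw [h1, mul_add, integral_const_mul, integral_const_mul]
          have nice1 : Nice (fun w => Wz x u w
              * mderiv u f (combine (insert j v) w x)) :=
            nice_form hx u (insert j v) hMc.continuous
          have nice2 : Nice (fun w => Wz x (insert j u) w
              * mderiv (insert j u) f (combine (insert j v) w x)) :=
            nice_form hx (insert j u) (insert j v) (contDiff_mderiv _ hf).continuous
          have g1eq : ∀ z : Fin d → ℝ,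
              (∫ r, (Wz x u z * mderiv u f (Function.update (combine v z x) j r)) ∂mu1)
              = ∫ r, (fun w => Wz x u w * mderiv u f (combine (insert j v) w x))
                  (Function.update z j r) ∂mu1 := by
            intro z
            refine integral_congr_ae (Filter.Eventually.of_forall fun r => ?_)
            show Wz x u z * mderiv u f (Function.update (combine v z x) j r)
              = Wz x u (Function.update z j r)
                * mderiv u f (combine (insert j v) (Function.update z j r) x)
            rw [Wz_update hju, combine_update_comm v z x r]
          have g2eq : ∀ z : Fin d → ℝ,
              (∫ r, (Wz x u z
                * (((r - Set.indicator (Set.Icc (x j) 1) (fun _ => (1:ℝ)) r : ℝ) : ℂ)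
                  * pderiv j (mderiv u f) (Function.update (combine v z x) j r))) ∂mu1)
              = ∫ r, (fun w => Wz x (insert j u) w
                  * mderiv (insert j u) f (combine (insert j v) w x))
                  (Function.update z j r) ∂mu1 := by
            intro z
            refine integral_congr_ae (Filter.Eventually.of_forall fun r => ?_)
            show Wz x u z
                * (((r - Set.indicator (Set.Icc (x j) 1) (fun _ => (1:ℝ)) r : ℝ) : ℂ)
                  * pderiv j (mderiv u f) (Function.update (combine v z x) j r))
              = Wz x (insert j u) (Function.update z j r)
                * mderiv (insert j u) f (combine (insert j v) (Function.update z j r) x)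
            rw [hmins, Wz_insert hju, Wz_update hju, combine_update_comm v z x r,
              Function.update_self]
            ring
          have A1 := marg j
            (fun w => Wz x u w * mderiv u f (combine (insert j v) w x)) nice1.integrable
          have A2 := marg j
            (fun w => Wz x (insert j u) w
              * mderiv (insert j u) f (combine (insert j v) w x)) nice2.integrable
          calc ∫ z, Wz x u z * mderiv u f (combine v z x) ∂(piMu d)
              = ∫ z, ((∫ r, (fun w => Wz x u w * mderiv u f (combine (insert j v) w x))
                    (Function.update z j r) ∂mu1)
                  + ∫ r, (fun w => Wz x (insert j u) w
                      * mderiv (insert j u) f (combine (insert j v) w x))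
                    (Function.update z j r) ∂mu1) ∂(piMu d) := by
                exact integral_congr_ae (Filter.Eventually.of_forall fun z =>
                  (point z).trans (congrArg₂ (· + ·) (g1eq z) (g2eq z)))
            _ = (∫ z, (∫ r, (fun w => Wz x u w * mderiv u f (combine (insert j v) w x))
                    (Function.update z j r) ∂mu1) ∂(piMu d))
                + ∫ z, (∫ r, (fun w => Wz x (insert j u) w
                      * mderiv (insert j u) f (combine (insert j v) w x))
                    (Function.update z j r) ∂mu1) ∂(piMu d) :=
                integral_add (nice_avg j nice1) (nice_avg j nice2)
            _ = _ := by rw [← A1, ← A2]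
        have hdisj : Disjoint v.powerset (v.powerset.image (insert j)) := by
          rw [Finset.disjoint_left]
          intro w hw1 hw2
          obtain ⟨u', _hu', rfl⟩ := Finset.mem_image.1 hw2
          exact hj (Finset.mem_powerset.1 hw1 (Finset.mem_insert_self j u'))
        have hinj : ∀ u1 ∈ v.powerset, ∀ u2 ∈ v.powerset,
            insert j u1 = insert j u2 → u1 = u2 := by
          intro u1 h1 u2 h2 he
          have hj1 : j ∉ u1 := fun h => hj (Finset.mem_powerset.1 h1 h)
          have hj2 : j ∉ u2 := fun h => hj (Finset.mem_powerset.1 h2 h)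
          rw [← Finset.erase_insert hj1, ← Finset.erase_insert hj2, he]
        calc f x
            = ∑ u ∈ v.powerset, ∫ z, Wz x u z * mderiv u f (combine v z x) ∂(piMu d) := ih
          _ = ∑ u ∈ v.powerset,
              ((∫ z, Wz x u z * mderiv u f (combine (insert j v) z x) ∂(piMu d))
                + ∫ z, Wz x (insert j u) z
                    * mderiv (insert j u) f (combine (insert j v) z x) ∂(piMu d)) :=
              Finset.sum_congr rfl key
          _ = (∑ u ∈ v.powerset,
                ∫ z, Wz x u z * mderiv u f (combine (insert j v) z x) ∂(piMu d))
              + ∑ u ∈ v.powerset,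
                ∫ z, Wz x (insert j u) z
                  * mderiv (insert j u) f (combine (insert j v) z x) ∂(piMu d) :=
              Finset.sum_add_distrib
          _ = (∑ u ∈ v.powerset,
                ∫ z, Wz x u z * mderiv u f (combine (insert j v) z x) ∂(piMu d))
              + ∑ w ∈ v.powerset.image (insert j),
                ∫ z, Wz x w z * mderiv w f (combine (insert j v) z x) ∂(piMu d) := by
              rw [Finset.sum_image hinj]
          _ = ∑ u ∈ (insert j v).powerset,
              ∫ z, Wz x u z * mderiv u f (combine (insert j v) z x) ∂(piMu d) := by
              rw [Finset.powerset_insert, Finset.sum_union hdisj]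
  have step := main Finset.univ
  rw [Finset.powerset_univ] at step
  refine step.trans (Finset.sum_congr rfl fun u _ => ?_)
  have hnice : Nice (fun z => Wz x u z * mderiv u f z) := by
    have h := nice_form hx u Finset.univ (contDiff_mderiv u hf).continuous
    simpa [combine_univ] using h
  calc ∫ z, Wz x u z * mderiv u f (combine Finset.univ z x) ∂(piMu d)
      = ∫ z, Wz x u z * mderiv u f z ∂(piMu d) := by simp_rw [combine_univ]
    _ = ∫ t, (∫ s, Wz x u (combine u t s) * mderiv u f (combine u t s) ∂(piMu d))
          ∂(piMu d) := unnest u hnice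
    _ = ∫ t, (Wz x u t * ∫ s, mderiv u f (combine u t s) ∂(piMu d)) ∂(piMu d) := by
        refine integral_congr_ae (Filter.Eventually.of_forall fun t => ?_)
        simp_rw [Wz_combine]
        exact integral_const_mul _ _
    _ = _ := rfl
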